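/- For every integer d ≥ 1, define H(d) = P_d·(1 − Q_d)⁻¹ in ℤ[[y,z]], where P_d = Σ_{i,j ≥ 0} C(d−1, i+j+1) yⁱzʲ and Q_d = Σ_{i,j ≥ 1} C(d, i+j) yⁱzʲ. Then H(d) has all coefficients nonnegative, and (1 − yz)·H(d) has all coefficients nonnegative; equivalently, for all p, q ≥ 0 the coefficient of y^{p+1}z^{q+1} in H(d) is at least the coefficient of y^p z^q in H(d). -/

import Mathlib

/-!
Since `Q_d` has nonnegative coefficients and no constant term, `G = (1 - Q_d)⁻¹` satisfies
`G = 1 + Q_d G`, which shows `G ≥ 0` by induction on the exponent; hence `H(d) = P_d G ≥ 0`.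
For the second claim, Pascal's rule gives
`(1 - yz) P_{d+1} = (1 - Q_{d+1}) + (1 + y)(1 + z) P_d`, so that
`(1 - yz) H(d+1) = 1 + (1 + y)(1 + z) P_d (1 - Q_{d+1})⁻¹ ≥ 0`; and `P_d = 0` for `d ≤ 1`.
-/

open MvPowerSeries

/-- `Q_d = Σ_{i,j ≥ 1} C(d, i+j) yⁱzʲ` as a power series in `ℤ[[y,z]]`
(`y = X 0`, `z = X 1`). -/
def Q (d : ℕ) : MvPowerSeries (Fin 2) ℤ :=
  fun e => if 1 ≤ e 0 ∧ 1 ≤ e 1 then (d.choose (e 0 + e 1) : ℤ) else 0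

/-- `P_d = Σ_{i,j ≥ 0} C(d-1, i+j+1) yⁱzʲ` as a power series in `ℤ[[y,z]]`. -/
def P (d : ℕ) : MvPowerSeries (Fin 2) ℤ :=
  fun e => ((d - 1).choose (e 0 + e 1 + 1) : ℤ)

/-- `H(d) = P_d · (1 - Q_d)⁻¹` (`1 - Q_d` is a unit of `ℤ[[y,z]]`, and
`Ring.inverse` gives its inverse). -/
noncomputable def H (d : ℕ) : MvPowerSeries (Fin 2) ℤ := P d * Ring.inverse (1 - Q d)

namespace MvPowerSeries

variable {σ R : Type*}

theorem coeff_X_mul [Semiring R] (s : σ) (F : MvPowerSeries σ R) (e : σ →₀ ℕ) :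
    coeff e (X s * F) = if e s = 0 then 0 else coeff (e - Finsupp.single s 1) F := by
  classical
  simp only [X, coeff_monomial_mul, Finsupp.single_le_iff, one_mul]
  split_ifs <;> first | rfl | omega

def Nonneg [Semiring R] [LE R] (F : MvPowerSeries σ R) : Prop :=
  ∀ e, 0 ≤ coeff e F

section OrderedSemiring

variable [Semiring R] [PartialOrder R] [IsOrderedRing R]

theorem nonneg_one : (1 : MvPowerSeries σ R).Nonneg := by
  classical
  intro e
  rw [coeff_one]
  split_ifs <;> simp

theorem nonneg_X (s : σ) : (X s : MvPowerSeries σ R).Nonneg := by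
  classical
  intro e
  rw [coeff_X]
  split_ifs <;> simp

theorem Nonneg.add {F G : MvPowerSeries σ R} (hF : F.Nonneg) (hG : G.Nonneg) :
    (F + G).Nonneg :=
  fun e => by simpa only [map_add] using add_nonneg (hF e) (hG e)

theorem Nonneg.mul {F G : MvPowerSeries σ R} (hF : F.Nonneg) (hG : G.Nonneg) :
    (F * G).Nonneg := by
  classical
  intro e
  rw [coeff_mul]
  exact Finset.sum_nonneg fun p _ => mul_nonneg (hF p.1) (hG p.2)

end OrderedSemiring

theorem Nonneg.inverse_one_sub [CommRing R] [PartialOrder R] [IsOrderedRing R]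
    {F : MvPowerSeries σ R} (hF : F.Nonneg) (hF₀ : constantCoeff F = 0) :
    (Ring.inverse (1 - F)).Nonneg := by
  classical
  set G := Ring.inverse (1 - F)
  have hunit : IsUnit (1 - F) := by simp [isUnit_iff_constantCoeff, hF₀]
  have hG : G = 1 + F * G := by linear_combination Ring.mul_inverse_cancel _ hunit
  intro e
  induction e using WellFoundedLT.induction with
  | _ e ih =>
    rw [hG, map_add, coeff_mul]
    refine add_nonneg (nonneg_one e) (Finset.sum_nonneg fun ⟨e₁, e₂⟩ he => ?_)
    rcases eq_or_ne e₁ 0 with rfl | he₁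
    · simp [hF₀]
    · rw [Finset.HasAntidiagonal.mem_antidiagonal] at he
      exact mul_nonneg (hF e₁) (ih e₂ (he ▸ lt_add_of_pos_left e₂ (pos_iff_ne_zero.2 he₁)))

end MvPowerSeries

lemma coeff_Q (d : ℕ) (e : Fin 2 →₀ ℕ) :
    coeff e (Q d) = if 1 ≤ e 0 ∧ 1 ≤ e 1 then (d.choose (e 0 + e 1) : ℤ) else 0 := rfl

lemma coeff_P (d : ℕ) (e : Fin 2 →₀ ℕ) :
    coeff e (P d) = ((d - 1).choose (e 0 + e 1 + 1) : ℤ) := rfl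

lemma P_nonneg (d : ℕ) : (P d).Nonneg := fun e => by
  rw [coeff_P]
  positivity

lemma Q_nonneg (d : ℕ) : (Q d).Nonneg := fun e => by
  rw [coeff_Q]
  split_ifs <;> positivity

lemma constantCoeff_Q (d : ℕ) : constantCoeff (Q d) = 0 := by
  rw [← coeff_zero_eq_constantCoeff_apply, coeff_Q]
  simp

lemma inverse_one_sub_Q_nonneg (d : ℕ) : (Ring.inverse (1 - Q d)).Nonneg :=
  (Q_nonneg d).inverse_one_sub (constantCoeff_Q d)

lemma H_nonneg (d : ℕ) : (H d).Nonneg :=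
  (P_nonneg d).mul (inverse_one_sub_Q_nonneg d)

lemma P_eq_zero_of_le_one {d : ℕ} (hd : d ≤ 1) : P d = 0 := by
  ext e
  rw [coeff_P, Nat.sub_eq_zero_of_le hd]
  simp

lemma one_sub_X_mul_X_mul_P (n : ℕ) :
    (1 - X 0 * X 1) * P (n + 2) = 1 - Q (n + 2) + (1 + X 0) * (1 + X 1) * P (n + 1) := by
  ext e
  simp only [sub_mul, add_mul, one_mul, mul_assoc, map_add, map_sub, coeff_X_mul, coeff_P,
    coeff_Q, coeff_one, Finsupp.ext_iff, Fin.forall_fin_two, Finsupp.coe_tsub, Pi.sub_apply,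
    Finsupp.single_apply, Finsupp.coe_zero, Pi.zero_apply]
  generalize e 0 = a
  generalize e 1 = b
  rcases a with _ | a <;> rcases b with _ | b <;> simp +arith <;>
    simp only [Nat.choose_succ_succ', Nat.cast_add] <;> ring

lemma one_sub_X_mul_X_mul_H (n : ℕ) :
    (1 - X 0 * X 1) * H (n + 2) =
      1 + (1 + X 0) * (1 + X 1) * (P (n + 1) * Ring.inverse (1 - Q (n + 2))) := by
  have hunit : IsUnit (1 - Q (n + 2)) := by
    simp [isUnit_iff_constantCoeff, constantCoeff_Q]
  rw [H, ← mul_assoc, one_sub_X_mul_X_mul_P, add_mul, Ring.mul_inverse_cancel _ hunit]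
  ring

lemma one_sub_X_mul_X_mul_H_nonneg (d : ℕ) : ((1 - X 0 * X 1) * H d).Nonneg := by
  obtain hd | ⟨n, rfl⟩ : d ≤ 1 ∨ ∃ n, d = n + 2 := by
    rcases d with _ | _ | n <;> simp
  · simp [H, P_eq_zero_of_le_one hd, Nonneg]
  · rw [one_sub_X_mul_X_mul_H]
    exact nonneg_one.add <| ((nonneg_one.add (nonneg_X 0)).mul
      (nonneg_one.add (nonneg_X 1))).mul ((P_nonneg _).mul (inverse_one_sub_Q_nonneg _))

theorem stmt5_general (d : ℕ) :
    (∀ e : Fin 2 →₀ ℕ, 0 ≤ coeff e (H d)) ∧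
    (∀ e : Fin 2 →₀ ℕ, 0 ≤ coeff e ((1 - X 0 * X 1) * H d)) :=
  ⟨H_nonneg d, one_sub_X_mul_X_mul_H_nonneg d⟩

/-- For `d ≥ 1`, `H(d)` has nonnegative coefficients and `(1 - yz)·H(d)` has
nonnegative coefficients, i.e. the coefficient of `y^{p+1}z^{q+1}` in `H(d)` is at
least the coefficient of `y^p z^q`. -/
theorem stmt5 (d : ℕ) (hd : 1 ≤ d) :
    (∀ e : Fin 2 →₀ ℕ, 0 ≤ coeff e (H d)) ∧
    (∀ e : Fin 2 →₀ ℕ, 0 ≤ coeff e ((1 - X 0 * X 1) * H d)) :=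
  stmt5_general d
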